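/- arXiv:1907.11560 — 2 statements merged into one kernel-verified Lean document; each statement's English description precedes it below -/
import Mathlib

section
/- If S is a nonempty down-admissible set for v, then max(S) < j (where a_j is the leading nonzero digit of v) and 1 ≤ v[S] < v; in particular v[S] is a positive integer. If S is a nonempty up-admissible set for v, then v < v(S). -/
namespace SL2Tilt

/-- The `i`-th `p`-adic digit of `v`. -/
def dig (p v i : ℕ) : ℕ := v / p ^ i % p

/-- A stretch: a nonempty finite set of consecutive integers. -/
def IsStretch (S : Finset ℕ) : Prop :=
  S.Nonempty ∧ ∀ a ∈ S, ∀ b ∈ S, ∀ c, a ≤ c → c ≤ b → c ∈ S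

/-- `S` is down-admissible for `v` (with respect to the prime `p`):
(d1) the digit of `v` at the minimum of each maximal stretch of `S` is nonzero, and
(d2) if `s ∈ S` and the `(s+1)`-st digit is `0`, then `s + 1 ∈ S`. -/
def DownAdm (p v : ℕ) (S : Finset ℕ) : Prop :=
  (∀ s ∈ S, (s = 0 ∨ s - 1 ∉ S) → dig p v s ≠ 0) ∧
  (∀ s ∈ S, dig p v (s + 1) = 0 → s + 1 ∈ S)

/-- `S` is up-admissible for `v` (with respect to the prime `p`):
(u1) the digit of `v` at the minimum of each maximal stretch of `S` is nonzero, and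
(u2) if `s ∈ S` and the `(s+1)`-st digit is `p - 1`, then `s + 1 ∈ S`. -/
def UpAdm (p v : ℕ) (S : Finset ℕ) : Prop :=
  (∀ s ∈ S, (s = 0 ∨ s - 1 ∉ S) → dig p v s ≠ 0) ∧
  (∀ s ∈ S, dig p v (s + 1) = p - 1 → s + 1 ∈ S)

/-- `v[S] = ∑ᵢ εᵢ aᵢ pⁱ` (εᵢ = -1 for i ∈ S, else 1), as an integer.
All nonzero digits of `v` have index `< v`, so the range `Finset.range v ∪ S` suffices. -/
def vdown (p v : ℕ) (S : Finset ℕ) : ℤ :=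
  ∑ i ∈ Finset.range v ∪ S,
    (if i ∈ S then (-1 : ℤ) else 1) * (dig p v i : ℤ) * (p : ℤ) ^ i

/-- `v(S) = ∑ᵢ aᵢ' pⁱ` where `aᵢ' = -aᵢ` if `i ∈ S`, `aᵢ' = aᵢ + 2` if `i ∉ S` and
`i - 1 ∈ S`, and `aᵢ' = aᵢ` otherwise; as an integer. -/
def vup (p v : ℕ) (S : Finset ℕ) : ℤ :=
  ∑ i ∈ Finset.range v ∪ S ∪ S.image (· + 1),
    (if i ∈ S then -(dig p v i : ℤ)
      else if i - 1 ∈ S then (dig p v i : ℤ) + 2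
      else (dig p v i : ℤ)) * (p : ℤ) ^ i

/-- `v[S]` as a natural number. -/
def vdownN (p v : ℕ) (S : Finset ℕ) : ℕ := (vdown p v S).toNat

/-- `v(S)` as a natural number. -/
def vupN (p v : ℕ) (S : Finset ℕ) : ℕ := (vup p v S).toNat

/-- `fancest' p v s` is `v` with the `p`-adic digits in positions `< s` set to zero.
This is the ancestor `fancest_{s-1}(v)` of the paper: the youngest ancestor of `v`
whose `(s-1)`-st digit is zero (with `fancest' p v 0 = fancest_{-1}(v) = v`). -/
def fancest' (p v s : ℕ) : ℕ := p ^ s * (v / p ^ s)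

/-- The scalar `λ_{v,S} = ∏_{s ∈ S} (-1)^(a_s p^s) · fancest_{s-1}(v)[S]± / fancest_s(v)[S]±`. -/
def lam (p v : ℕ) (S : Finset ℕ) : ℚ :=
  ∏ s ∈ S,
    (-1 : ℚ) ^ (dig p v s * p ^ s) *
      ((vdown p (fancest' p v s) S : ℚ) / (vdown p (fancest' p v (s + 1)) S : ℚ))

/-- The generation of `v` : the number of (matrilineal) ancestors of `v`, i.e. the
number of nonzero `p`-adic digits of `v` minus one. -/
def gen (p v : ℕ) : ℕ :=
  ((Finset.range v).filter (fun i => dig p v i ≠ 0)).card - 1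

/-- A minimal down-admissible stretch for `v`: a down-admissible stretch, no proper
nonempty subset of which is down-admissible for `v`. -/
def MinDownStretch (p v : ℕ) (S : Finset ℕ) : Prop :=
  DownAdm p v S ∧ IsStretch S ∧ ∀ T ⊂ S, T.Nonempty → ¬ DownAdm p v T

/-- A minimal up-admissible stretch for `v`. -/
def MinUpStretch (p v : ℕ) (S : Finset ℕ) : Prop :=
  UpAdm p v S ∧ IsStretch S ∧ ∀ T ⊂ S, T.Nonempty → ¬ UpAdm p v T

/-- `A` and `B` are distant: `d(A,B) > 1`, i.e. `|a - b| > 1` for all `a ∈ A`, `b ∈ B`. -/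
def Distant (A B : Finset ℕ) : Prop :=
  ∀ a ∈ A, ∀ b ∈ B, a + 1 < b ∨ b + 1 < a


section Aux

lemma dig_sum_mod (p v : ℕ) (n : ℕ) :
    ∑ i ∈ Finset.range n, dig p v i * p ^ i = v % p ^ n := by
  induction n with
  | zero => simp [Nat.mod_one]
  | succ n ih =>
    rw [Finset.sum_range_succ, ih, pow_succ, Nat.mod_mul, dig]
    ring

lemma dig_eq_zero (p v : ℕ) (hp : 1 < p) {i : ℕ} (h : v ≤ i) : dig p v i = 0 := by
  have : v < p ^ i := lt_of_le_of_lt h (Nat.lt_pow_self hp (n := i))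
  simp [dig, Nat.div_eq_of_lt this]

lemma dig_sum_self (p v : ℕ) (hp : 1 < p) :
    ∑ i ∈ Finset.range v, (dig p v i : ℤ) * (p : ℤ) ^ i = v := by
  have h1 := dig_sum_mod p v v
  have h2 : v % p ^ v = v := Nat.mod_eq_of_lt (Nat.lt_pow_self hp (n := v))
  rw [h2] at h1
  exact_mod_cast congrArg (Nat.cast : ℕ → ℤ) h1

lemma dig_sum_big (p v : ℕ) (hp : 1 < p) (U : Finset ℕ) (hU : Finset.range v ⊆ U) :
    ∑ i ∈ U, (dig p v i : ℤ) * (p : ℤ) ^ i = v := by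
  rw [← Finset.sum_subset hU, dig_sum_self p v hp]
  intro x _ hx
  have : v ≤ x := by
    by_contra h; exact hx (Finset.mem_range.mpr (by omega))
  simp [dig_eq_zero p v hp this]

lemma sum_ite_subset (S U : Finset ℕ) (h : S ⊆ U) (f : ℕ → ℤ) :
    ∑ i ∈ U, (if i ∈ S then f i else 0) = ∑ i ∈ S, f i := by
  rw [Finset.sum_ite_mem, Finset.inter_eq_right.mpr h]

lemma vdown_eq (p v : ℕ) (hp : 1 < p) (S : Finset ℕ) :
    vdown p v S = v - 2 * ∑ i ∈ S, (dig p v i : ℤ) * (p : ℤ) ^ i := by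
  have h1 : vdown p v S = (∑ i ∈ Finset.range v ∪ S, (dig p v i : ℤ) * (p : ℤ) ^ i)
      - 2 * ∑ i ∈ Finset.range v ∪ S,
          (if i ∈ S then (dig p v i : ℤ) * (p : ℤ) ^ i else 0) := by
    rw [vdown, Finset.mul_sum, ← Finset.sum_sub_distrib]
    apply Finset.sum_congr rfl
    intro i _
    by_cases h : i ∈ S <;> simp [h] <;> ring
  rw [h1, dig_sum_big p v hp _ Finset.subset_union_left,
    sum_ite_subset S _ Finset.subset_union_right]

lemma vup_eq (p v : ℕ) (hp : 1 < p) (S : Finset ℕ) :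
    vup p v S = v - 2 * (∑ i ∈ S, (dig p v i : ℤ) * (p : ℤ) ^ i)
      + 2 * ∑ i ∈ S.image (· + 1) \ S, (p : ℤ) ^ i := by
  have h1 : vup p v S = (∑ i ∈ Finset.range v ∪ S ∪ S.image (· + 1),
        (dig p v i : ℤ) * (p : ℤ) ^ i)
      - 2 * (∑ i ∈ Finset.range v ∪ S ∪ S.image (· + 1),
          (if i ∈ S then (dig p v i : ℤ) * (p : ℤ) ^ i else 0))
      + 2 * ∑ i ∈ Finset.range v ∪ S ∪ S.image (· + 1),
          (if i ∈ S.image (· + 1) \ S then (p : ℤ) ^ i else 0) := by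
    rw [vup, Finset.mul_sum, Finset.mul_sum, ← Finset.sum_sub_distrib,
      ← Finset.sum_add_distrib]
    apply Finset.sum_congr rfl
    intro i _
    by_cases h1 : i ∈ S
    · have h2 : i ∉ S.image (· + 1) \ S := by simp [h1]
      simp [h1, h2]; ring
    · by_cases h2 : i - 1 ∈ S
      · have hi0 : i ≠ 0 := by
          rintro rfl; exact h1 (by simpa using h2)
        have h3 : i ∈ S.image (· + 1) \ S := by
          rw [Finset.mem_sdiff]
          exact ⟨Finset.mem_image.mpr ⟨i - 1, h2, by omega⟩, h1⟩
        simp [h1, h2, h3]; ring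
      · have h3 : i ∉ S.image (· + 1) \ S := by
          rw [Finset.mem_sdiff]
          rintro ⟨hmem, -⟩
          obtain ⟨s, hs, rfl⟩ := Finset.mem_image.mp hmem
          exact h2 (by simpa using hs)
        simp [h1, h2, h3]
  rw [h1, dig_sum_big p v hp _ (Finset.subset_union_left.trans Finset.subset_union_left),
    sum_ite_subset S _ (Finset.subset_union_right.trans Finset.subset_union_left),
    sum_ite_subset _ _ (Finset.sdiff_subset.trans Finset.subset_union_right)]

end Aux

/-- If `S` is nonempty down-admissible for `v`, then all elements of `S` are below the
index `j = log_p v` of the leading digit, and `1 ≤ v[S] < v`. If `S` is nonempty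
up-admissible for `v`, then `v < v(S)`. -/
theorem stmt15 (p v : ℕ) (hp : p.Prime) (hv : 1 ≤ v) (S : Finset ℕ)
    (hne : S.Nonempty) :
    (DownAdm p v S →
      (∀ s ∈ S, s < Nat.log p v) ∧ 1 ≤ vdown p v S ∧ vdown p v S < (v : ℤ)) ∧
    (UpAdm p v S → (v : ℤ) < vup p v S) := by
  have hp1 : 1 < p := hp.one_lt
  have hp0 : (0 : ℤ) < p := by exact_mod_cast hp.pos
  set T : ℤ := ∑ i ∈ S, (dig p v i : ℤ) * (p : ℤ) ^ i with hT
  have hterm_nonneg : ∀ i ∈ S, (0 : ℤ) ≤ (dig p v i : ℤ) * (p : ℤ) ^ i := by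
    intro i _; positivity
  set mn := S.min' hne with hmn
  have hmnS : mn ∈ S := S.min'_mem hne
  have hmn_min : ∀ s ∈ S, mn ≤ s := fun s hs => S.min'_le s hs
  constructor
  · rintro ⟨hd1, hd2⟩
    set m := S.max' hne with hm
    have hmS : m ∈ S := S.max'_mem hne
    have hm_max : ∀ s ∈ S, s ≤ m := fun s hs => S.le_max' s hs
    have hm1S : m + 1 ∉ S := fun h => by have := hm_max _ h; omega
    have hdm : dig p v (m + 1) ≠ 0 := fun h => hm1S (hd2 m hmS h)
    have hpv : p ^ (m + 1) ≤ v := by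
      by_contra h
      push_neg at h
      exact hdm (by simp [dig, Nat.div_eq_of_lt h])
    have hlog : m + 1 ≤ Nat.log p v := Nat.le_log_of_pow_le hp1 hpv
    refine ⟨fun s hs => by have := hm_max s hs; omega, ?_, ?_⟩
    · -- 1 ≤ vdown
      rw [vdown_eq p v hp1]
      have hTnat : T = ((∑ i ∈ S, dig p v i * p ^ i : ℕ) : ℤ) := by push_cast [hT]; rfl
      have hsub : S ⊆ Finset.range (m + 1) := fun s hs =>
        Finset.mem_range.mpr (by have := hm_max s hs; omega)
      have hTle : (∑ i ∈ S, dig p v i * p ^ i : ℕ) ≤ v % p ^ (m + 1) := by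
        rw [← dig_sum_mod p v (m + 1)]
        exact Finset.sum_le_sum_of_subset hsub
      have hdiv : p ^ (m + 1) * (v / p ^ (m + 1)) + v % p ^ (m + 1) = v :=
        Nat.div_add_mod v (p ^ (m + 1))
      have hq : 1 ≤ v / p ^ (m + 1) := (Nat.one_le_div_iff (by positivity)).mpr hpv
      have hr : v % p ^ (m + 1) < p ^ (m + 1) := Nat.mod_lt v (by positivity)
      have hP : ((p : ℤ) ^ (m + 1)) ≤ (p : ℤ) ^ (m + 1) * (v / p ^ (m + 1) : ℕ) :=
        le_mul_of_one_le_right (by positivity) (by exact_mod_cast hq)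
      have hdivZ : ((p : ℤ) ^ (m + 1)) * (v / p ^ (m + 1) : ℕ) + (v % p ^ (m + 1) : ℕ) = v := by
        exact_mod_cast hdiv
      have hTleZ : T ≤ ((v % p ^ (m + 1) : ℕ) : ℤ) := by
        rw [hTnat]; exact_mod_cast hTle
      have hrZ : ((v % p ^ (m + 1) : ℕ) : ℤ) < (p : ℤ) ^ (m + 1) := by exact_mod_cast hr
      linarith
    · -- vdown < v
      rw [vdown_eq p v hp1]
      have hdmn : dig p v mn ≠ 0 := by
        apply hd1 mn hmnS
        rcases Nat.eq_zero_or_pos mn with h | h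
        · exact Or.inl h
        · exact Or.inr fun hmem => by have := hmn_min _ hmem; omega
      have h1 : (1 : ℤ) ≤ (dig p v mn : ℤ) * (p : ℤ) ^ mn := by
        have : 1 ≤ dig p v mn := Nat.one_le_iff_ne_zero.mpr hdmn
        have h2 : (1 : ℤ) ≤ (dig p v mn : ℤ) := by exact_mod_cast this
        have h3 : (1 : ℤ) ≤ (p : ℤ) ^ mn := one_le_pow₀ (by linarith)
        nlinarith
      have hle : (dig p v mn : ℤ) * (p : ℤ) ^ mn ≤ T :=
        Finset.single_le_sum hterm_nonneg hmnS
      linarith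
  · rintro ⟨hu1, hu2⟩
    rw [vup_eq p v hp1]
    set E : ℤ := ∑ i ∈ S.image (· + 1) \ S, (p : ℤ) ^ i with hE
    -- T ≤ sum (p-1) p^i
    have hTle : T ≤ ∑ i ∈ S, ((p : ℤ) - 1) * (p : ℤ) ^ i := by
      apply Finset.sum_le_sum
      intro i _
      have h0 : dig p v i < p := Nat.mod_lt _ hp.pos
      have : (dig p v i : ℤ) ≤ (p : ℤ) - 1 := by
        have : (dig p v i : ℤ) < p := by exact_mod_cast h0
        linarith
      exact mul_le_mul_of_nonneg_right this (by positivity)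
    have himg : ∑ i ∈ S.image (· + 1), (p : ℤ) ^ i = ∑ i ∈ S, (p : ℤ) ^ (i + 1) := by
      rw [Finset.sum_image]
      intro a _ b _ h; simp only at h; omega
    have hsplit1 : ∑ i ∈ S.image (· + 1), (p : ℤ) ^ i
        = ∑ i ∈ S.image (· + 1) ∩ S, (p : ℤ) ^ i + E :=
      (Finset.sum_inter_add_sum_sdiff _ _ _).symm
    have hsplit2 : ∑ i ∈ S, (p : ℤ) ^ i
        = ∑ i ∈ S ∩ S.image (· + 1), (p : ℤ) ^ i + ∑ i ∈ S \ S.image (· + 1), (p : ℤ) ^ i :=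
      (Finset.sum_inter_add_sum_sdiff _ _ _).symm
    have hcomm : ∑ i ∈ S.image (· + 1) ∩ S, (p : ℤ) ^ i
        = ∑ i ∈ S ∩ S.image (· + 1), (p : ℤ) ^ i := by rw [Finset.inter_comm]
    have hsum_eq : ∑ i ∈ S, ((p : ℤ) - 1) * (p : ℤ) ^ i
        = ∑ i ∈ S.image (· + 1), (p : ℤ) ^ i - ∑ i ∈ S, (p : ℤ) ^ i := by
      rw [himg, ← Finset.sum_sub_distrib]
      apply Finset.sum_congr rfl
      intro i _; ring
    have hmn_img : mn ∉ S.image (· + 1) := by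
      intro h
      obtain ⟨s, hs, hs2⟩ := Finset.mem_image.mp h
      have := hmn_min s hs
      omega
    have hmn_sdiff : mn ∈ S \ S.image (· + 1) := Finset.mem_sdiff.mpr ⟨hmnS, hmn_img⟩
    have hsd : (1 : ℤ) ≤ ∑ i ∈ S \ S.image (· + 1), (p : ℤ) ^ i := by
      have h1 : (1 : ℤ) ≤ (p : ℤ) ^ mn := one_le_pow₀ (by linarith)
      have h2 : ((p : ℤ) ^ mn) ≤ ∑ i ∈ S \ S.image (· + 1), (p : ℤ) ^ i :=
        Finset.single_le_sum (fun i _ => by positivity) hmn_sdiff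
      linarith
    linarith


end SL2Tilt
end

section
/- Let S be down-admissible for v, and let S′ = {s, s+1, …, s′−1} be a minimal down-admissible stretch for v with s ∈ S and s′ ∉ S. Then S′ ⊆ S, the set S ∖ S′ is down-admissible for v[S′], and λ_{v,S} · (−1)^{a_s p^s} · fancest_s(v)[S]_± / fancest_{s−1}(v)[S]_± = λ_{v[S′], S ∖ S′}. -/
namespace SL2Tilt

/-!
Minimality forces the digits of `v` on `[s, s']` to be `aₛ ≠ 0`, then zeros, then `a_{s'} ≠ 0`.
Hence (d2) propagates `s ∈ S` to `S' ⊆ S`, and `v[S'] = v - 2 aₛ pˢ`. This subtraction borrows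
from position `s'`: it changes no digit outside `[s, s']` and makes the digit at `s` equal to
`p - aₛ ≠ 0`, so `S ∖ S'` stays down-admissible, and `fancest_{t-1}(v[S'])[S ∖ S'] =
fancest_{t-1}(v)[S]` whenever `t ≤ s` or `s' < t`. Therefore the factors of `λ` indexed by
`S ∖ S'` coincide, the factors at `s < t < s'` equal `1` since `aₜ = 0`, and the factor at `s` is
cancelled by the extra term. All quotients involved are nonzero because `fancest_{k-1}(v)[S] ≥ pᵏ`
whenever `k ∈ S` or `aₖ ≠ 0`.
-/

open Finset

section Digits

variable {p : ℕ}

lemma dig_lt (hp : 0 < p) (v i : ℕ) : dig p v i < p := Nat.mod_lt _ hp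

lemma lt_pow_of_le (hp : 2 ≤ p) {v i : ℕ} (h : v ≤ i) : v < p ^ i :=
  (Nat.lt_pow_self (by omega)).trans_le (Nat.pow_le_pow_right (by omega) h)

lemma dig_eq_zero_of_lt_pow {v i : ℕ} (h : v < p ^ i) : dig p v i = 0 := by
  simp [dig, Nat.div_eq_of_lt h]

lemma sum_dig_mul_pow (v n : ℕ) : ∑ i ∈ range n, dig p v i * p ^ i = v % p ^ n := by
  induction n with
  | zero => simp [Nat.mod_one]
  | succ n ih => rw [sum_range_succ, ih, Nat.mod_pow_succ, dig, mul_comm]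

lemma dig_eq_of_mod_pow_eq {x y n i : ℕ} (h : x % p ^ n = y % p ^ n) (hi : i < n) :
    dig p x i = dig p y i := by
  have hdvd : p ^ i * p ∣ p ^ n := by rw [← pow_succ]; exact pow_dvd_pow p hi
  rw [dig, dig, ← Nat.mod_mul_right_div_self, ← Nat.mod_mul_right_div_self,
    ← Nat.mod_mod_of_dvd x hdvd, ← Nat.mod_mod_of_dvd y hdvd, h]

lemma mod_pow_eq_of_dig_eq_zero {v m n : ℕ} (hmn : m ≤ n) (h : ∀ i ∈ Ico m n, dig p v i = 0) :
    v % p ^ n = v % p ^ m := by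
  induction n, hmn using Nat.le_induction with
  | base => rfl
  | succ n hmn ih =>
    have hn : dig p v n = 0 := h n (mem_Ico.2 ⟨hmn, n.lt_succ_self⟩)
    rw [Nat.mod_pow_succ, ← dig, hn, mul_zero, add_zero,
      ih fun i hi => h i (Ico_subset_Ico_right n.le_succ hi)]

end Digits

section Vdown

variable {p : ℕ}

lemma vdown_eq_sub (hp : 2 ≤ p) (v : ℕ) (S : Finset ℕ) :
    vdown p v S = v - 2 * ∑ i ∈ S, (dig p v i : ℤ) * (p : ℤ) ^ i := by
  have hsplit : ∀ i ∈ range v ∪ S,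
      (if i ∈ S then (-1 : ℤ) else 1) * (dig p v i : ℤ) * (p : ℤ) ^ i =
        (dig p v i : ℤ) * (p : ℤ) ^ i -
          2 * (if i ∈ S then (dig p v i : ℤ) * (p : ℤ) ^ i else 0) := by
    intro i _
    split_ifs <;> ring
  have hdigits : ∑ i ∈ range v ∪ S, (dig p v i : ℤ) * (p : ℤ) ^ i = v := by
    rw [← sum_subset subset_union_left]
    · exact_mod_cast (sum_dig_mul_pow v v).trans (Nat.mod_eq_of_lt (lt_pow_of_le hp le_rfl))
    · intro i _ hi
      simp [dig_eq_zero_of_lt_pow (lt_pow_of_le hp (by simpa using hi))]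
  rw [vdown, sum_congr rfl hsplit, sum_sub_distrib, ← mul_sum, sum_ite_mem,
    union_inter_cancel_right, hdigits]

lemma vdown_sdiff_of_vdown_eq (hp : 2 ≤ p) {x y : ℕ} {A S : Finset ℕ} (hA : A ⊆ S)
    (hx : (x : ℤ) = vdown p y A) (hdig : ∀ i ∈ S \ A, dig p x i = dig p y i) :
    vdown p x (S \ A) = vdown p y S := by
  have hsum : ∑ i ∈ S \ A, (dig p x i : ℤ) * (p : ℤ) ^ i =
      ∑ i ∈ S \ A, (dig p y i : ℤ) * (p : ℤ) ^ i :=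
    sum_congr rfl fun i hi => by rw [hdig i hi]
  rw [vdown_eq_sub hp, vdown_eq_sub hp, hx, vdown_eq_sub hp, ← sum_sdiff hA, hsum]
  ring

lemma vdown_Ico_eq (hp : 2 ≤ p) {v s s' : ℕ} (hss : s < s')
    (hmid : ∀ i ∈ Ioo s s', dig p v i = 0) :
    vdown p v (Ico s s') = v - 2 * dig p v s * (p : ℤ) ^ s := by
  rw [vdown_eq_sub hp, sum_eq_sum_Ico_succ_bot hss,
    sum_eq_zero fun i hi => by rw [hmid i (by simpa using hi)]; simp]
  ring

end Vdown

section Fancest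

variable {p : ℕ}

lemma fancest'_eq_sub_mod (v t : ℕ) : fancest' p v t = v - v % p ^ t := by
  have := Nat.div_add_mod v (p ^ t)
  rw [fancest']
  omega

lemma fancest'_eq_zero_of_lt_pow {v t : ℕ} (h : v < p ^ t) : fancest' p v t = 0 := by
  simp [fancest', Nat.div_eq_of_lt h]

lemma dig_fancest' (hp : 0 < p) (v t i : ℕ) :
    dig p (fancest' p v t) i = if i < t then 0 else dig p v i := by
  unfold fancest' dig
  split_ifs with h
  · have : p ^ t = p ^ i * (p * p ^ (t - i - 1)) := by
      rw [← pow_succ', ← pow_add]; congr 1; omega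
    rw [this, mul_assoc, Nat.mul_div_cancel_left _ (by positivity), mul_assoc, Nat.mul_mod_right]
  · have : p ^ i = p ^ t * p ^ (i - t) := by rw [← pow_add]; congr 1; omega
    rw [this, ← Nat.div_div_eq_div_mul, Nat.mul_div_cancel_left _ (by positivity),
      Nat.div_div_eq_div_mul]

lemma dig_eq_of_fancest'_eq (hp : 0 < p) {x y i : ℕ} (h : fancest' p x i = fancest' p y i) :
    dig p x i = dig p y i := by
  simpa [dig_fancest' hp] using congrArg (dig p · i) h

lemma fancest'_eq_add (v k : ℕ) :
    fancest' p v k = dig p v k * p ^ k + fancest' p v (k + 1) := by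
  have h : p * (v / p ^ (k + 1)) + dig p v k = v / p ^ k := by
    rw [pow_succ, ← Nat.div_div_eq_div_mul]
    exact Nat.div_add_mod _ _
  calc fancest' p v k = p ^ k * (p * (v / p ^ (k + 1)) + dig p v k) := by rw [h, fancest']
    _ = dig p v k * p ^ k + fancest' p v (k + 1) := by rw [fancest', pow_succ]; ring

lemma vdown_fancest'_eq_add (hp : 2 ≤ p) (v k : ℕ) (S : Finset ℕ) :
    vdown p (fancest' p v k) S =
      (if k ∈ S then -1 else 1) * dig p v k * (p : ℤ) ^ k + vdown p (fancest' p v (k + 1)) S := by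
  have hdig : ∀ i, (dig p (fancest' p v k) i : ℤ) * (p : ℤ) ^ i =
      dig p (fancest' p v (k + 1)) i * (p : ℤ) ^ i +
        if k = i then dig p v k * (p : ℤ) ^ k else 0 := by
    intro i
    simp only [dig_fancest' (by omega : 0 < p)]
    split_ifs <;> simp_all <;> omega
  rw [vdown_eq_sub hp, vdown_eq_sub hp, sum_congr rfl fun i _ => hdig i, sum_add_distrib,
    sum_ite_eq, fancest'_eq_add v k]
  push_cast
  split_ifs <;> ring

end Fancest

section Positivity

variable {p : ℕ}

/-- `vdown p (fancest' p v k) S` is the tail `∑_{i ≥ k} ±aᵢ pⁱ` of `v[S]`. By (d2) every block of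
negated digits is followed by a nonzero digit, which outweighs the whole block. -/
lemma le_vdown_fancest' (hp : 2 ≤ p) {v : ℕ} {S : Finset ℕ}
    (hS : ∀ i ∈ S, dig p v (i + 1) = 0 → i + 1 ∈ S) (k : ℕ) :
    (if k ∈ S ∨ dig p v k ≠ 0 then (p : ℤ) ^ k else 0) ≤ vdown p (fancest' p v k) S := by
  induction k using Nat.strong_decreasing_induction with
  | base =>
    refine ⟨v + S.sup id, fun m hm => ?_⟩
    have hvm : v < p ^ m := lt_pow_of_le hp (by omega)
    have hmS : m ∉ S := fun h => by have := le_sup (f := id) h; simp at this; omega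
    rw [if_neg (by simp [hmS, dig_eq_zero_of_lt_pow hvm]), fancest'_eq_zero_of_lt_pow hvm,
      vdown_eq_sub hp]
    simp [dig]
  | step k ih =>
    have hnext := ih (k + 1) k.lt_succ_self
    have hpk : (0 : ℤ) < (p : ℤ) ^ k := by positivity
    have hdig : (dig p v k : ℤ) + 1 ≤ p := by have := dig_lt (by omega : 0 < p) v k; omega
    rw [vdown_fancest'_eq_add hp]
    by_cases hk : k ∈ S
    · have hk1 : k + 1 ∈ S ∨ dig p v (k + 1) ≠ 0 := by
        by_cases h : dig p v (k + 1) = 0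
        · exact Or.inl (hS k hk h)
        · exact Or.inr h
      rw [if_pos hk1, pow_succ] at hnext
      have := mul_le_mul_of_nonneg_left hdig hpk.le
      rw [if_pos (Or.inl hk), if_pos hk]
      nlinarith
    · have hnext : 0 ≤ vdown p (fancest' p v (k + 1)) S :=
        le_trans (by split_ifs <;> positivity) hnext
      by_cases hd : dig p v k = 0
      · simp [hk, hd, hnext]
      · have : (1 : ℤ) ≤ dig p v k := by have := Nat.one_le_iff_ne_zero.2 hd; exact_mod_cast this
        rw [if_pos (Or.inr hd), if_neg hk]
        nlinarith

lemma vdown_fancest'_pos (hp : 2 ≤ p) {v k : ℕ} {S : Finset ℕ} (hS : DownAdm p v S)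
    (hk : k ∈ S ∨ dig p v k ≠ 0) : 0 < vdown p (fancest' p v k) S := by
  have := le_vdown_fancest' hp hS.2 k
  rw [if_pos hk] at this
  exact lt_of_lt_of_le (by positivity) this

end Positivity

section Subtraction

variable {p : ℕ}

lemma mod_pow_le_mod_pow (v : ℕ) {m n : ℕ} (h : m ≤ n) : v % p ^ m ≤ v % p ^ n := by
  rw [← Nat.mod_mod_of_dvd v (pow_dvd_pow p h)]
  exact Nat.mod_le _ _

lemma fancest'_sub_of_le_mod {v c t : ℕ} (h : c ≤ v % p ^ t) :
    fancest' p (v - c) t = fancest' p v t := by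
  rw [fancest'_eq_sub_mod, fancest'_eq_sub_mod, ← Nat.mod_sub_of_le h]
  omega

lemma fancest'_sub_mul_pow_of_le {v k s t : ℕ} (ht : t ≤ s) (h : k * p ^ s ≤ v) :
    fancest' p (v - k * p ^ s) t = fancest' p v t - k * p ^ s := by
  have hk : k * p ^ s = p ^ t * (k * p ^ (s - t)) := by
    rw [mul_left_comm, ← pow_add, Nat.add_sub_cancel' ht]
  rw [fancest'_eq_sub_mod, fancest'_eq_sub_mod, hk, Nat.sub_mul_mod (hk ▸ h)]
  omega

lemma dig_sub_mul_pow_of_lt {v k s i : ℕ} (hi : i < s) (h : k * p ^ s ≤ v) :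
    dig p (v - k * p ^ s) i = dig p v i := by
  rw [mul_comm] at h ⊢
  exact dig_eq_of_mod_pow_eq (Nat.sub_mul_mod h) hi

end Subtraction

section Gap

variable {p v s s' : ℕ}

lemma mod_add_two_mul_dig_mul_pow_le_mod (hp : 2 ≤ p) (hss : s < s')
    (hmid : ∀ i ∈ Ioo s s', dig p v i = 0) (hs' : dig p v s' ≠ 0) :
    v % p ^ s + 2 * dig p v s * p ^ s ≤ v % p ^ (s' + 1) := by
  have hgap : v % p ^ s' = v % p ^ (s + 1) :=
    mod_pow_eq_of_dig_eq_zero hss fun i hi =>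
      hmid i (by simp only [mem_Ico, mem_Ioo] at hi ⊢; omega)
  have hs : v % p ^ (s + 1) = v % p ^ s + p ^ s * dig p v s := Nat.mod_pow_succ
  have hs'1 : v % p ^ (s' + 1) = v % p ^ s' + p ^ s' * dig p v s' := Nat.mod_pow_succ
  have hpow : p ^ s * dig p v s + p ^ s ≤ p ^ s' :=
    calc p ^ s * dig p v s + p ^ s = p ^ s * (dig p v s + 1) := by ring
      _ ≤ p ^ s * p := Nat.mul_le_mul_left _ (dig_lt (by omega) v s)
      _ = p ^ (s + 1) := by ring
      _ ≤ p ^ s' := Nat.pow_le_pow_right (by omega) hss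
  have hs'pos : p ^ s' ≤ p ^ s' * dig p v s' := Nat.le_mul_of_pos_right _ (Nat.pos_of_ne_zero hs')
  rw [hs'1, hgap, hs, mul_assoc, mul_comm (dig p v s), two_mul]
  omega

lemma two_mul_dig_mul_pow_le (hp : 2 ≤ p) (hss : s < s')
    (hmid : ∀ i ∈ Ioo s s', dig p v i = 0) (hs' : dig p v s' ≠ 0) :
    2 * dig p v s * p ^ s ≤ v :=
  calc 2 * dig p v s * p ^ s ≤ v % p ^ (s' + 1) :=
        le_of_add_le_right (mod_add_two_mul_dig_mul_pow_le_mod hp hss hmid hs')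
    _ ≤ v := Nat.mod_le _ _

lemma vdownN_Ico_eq (hp : 2 ≤ p) (hss : s < s')
    (hmid : ∀ i ∈ Ioo s s', dig p v i = 0) (hs' : dig p v s' ≠ 0) :
    vdownN p v (Ico s s') = v - 2 * dig p v s * p ^ s := by
  rw [vdownN, vdown_Ico_eq hp hss hmid, ← Int.toNat_natCast (v - _),
    Nat.cast_sub (two_mul_dig_mul_pow_le hp hss hmid hs')]
  push_cast
  rfl

lemma dig_vdownN_Ico_of_lt_or_lt (hp : 2 ≤ p) (hss : s < s')
    (hmid : ∀ i ∈ Ioo s s', dig p v i = 0) (hs' : dig p v s' ≠ 0) {i : ℕ} (hi : i < s ∨ s' < i) :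
    dig p (vdownN p v (Ico s s')) i = dig p v i := by
  rw [vdownN_Ico_eq hp hss hmid hs']
  rcases hi with hi | hi
  · exact dig_sub_mul_pow_of_lt hi (two_mul_dig_mul_pow_le hp hss hmid hs')
  · refine dig_eq_of_fancest'_eq (by omega) (fancest'_sub_of_le_mod ?_)
    exact (le_of_add_le_right (mod_add_two_mul_dig_mul_pow_le_mod hp hss hmid hs')).trans
      (mod_pow_le_mod_pow v hi)

/-- Subtracting `2 aₛ pˢ` turns the digit `aₛ` into `p - aₛ`, since the nonzero digit at `s'`
supplies the borrow. -/
lemma dig_vdownN_Ico_ne_zero (hp : 2 ≤ p) (hss : s < s') (hs : dig p v s ≠ 0)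
    (hmid : ∀ i ∈ Ioo s s', dig p v i = 0) (hs' : dig p v s' ≠ 0) :
    dig p (vdownN p v (Ico s s')) s ≠ 0 := by
  set a := dig p v s
  have hle : 2 * a ≤ v / p ^ s :=
    (Nat.le_div_iff_mul_le (by positivity)).2 (two_mul_dig_mul_pow_le hp hss hmid hs')
  rw [vdownN_Ico_eq hp hss hmid hs', dig, mul_comm, Nat.sub_mul_div]
  intro h0
  have hdvd : p ∣ (v / p ^ s - a) - (v / p ^ s - 2 * a) :=
    Nat.dvd_sub (Nat.dvd_of_mod_eq_zero (Nat.sub_mod_eq_zero_of_mod_eq (by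
      rw [Nat.mod_eq_of_lt (dig_lt (by omega) v s)]; rfl))) (Nat.dvd_of_mod_eq_zero h0)
  rw [show v / p ^ s - a - (v / p ^ s - 2 * a) = a by omega] at hdvd
  exact absurd (Nat.le_of_dvd (Nat.pos_of_ne_zero hs) hdvd) (not_le.2 (dig_lt (by omega) v s))

lemma fancest'_vdownN_Ico (hp : 2 ≤ p) (hss : s < s')
    (hmid : ∀ i ∈ Ioo s s', dig p v i = 0) (hs' : dig p v s' ≠ 0) {t : ℕ} (ht : t ≤ s ∨ s' < t) :
    (fancest' p (vdownN p v (Ico s s')) t : ℤ) = vdown p (fancest' p v t) (Ico s s') := by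
  have hbound := mod_add_two_mul_dig_mul_pow_le_mod hp hss hmid hs'
  have hmid' : ∀ i ∈ Ioo s s', dig p (fancest' p v t) i = 0 := fun i hi => by
    rw [dig_fancest' (by omega)]
    split_ifs
    · rfl
    · exact hmid i hi
  rw [vdown_Ico_eq hp hss hmid', dig_fancest' (by omega), vdownN_Ico_eq hp hss hmid hs']
  rcases ht with ht | ht
  · have hle : 2 * dig p v s * p ^ s ≤ fancest' p v t := by
      rw [fancest'_eq_sub_mod]
      have := mod_pow_le_mod_pow (p := p) v ht
      have := Nat.mod_le v (p ^ (s' + 1))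
      omega
    rw [if_neg (by omega), fancest'_sub_mul_pow_of_le ht (two_mul_dig_mul_pow_le hp hss hmid hs'),
      Nat.cast_sub hle]
    push_cast
    ring
  · rw [if_pos (by omega), fancest'_sub_of_le_mod
      ((le_of_add_le_right hbound).trans (mod_pow_le_mod_pow v ht))]
    simp

end Gap

section Admissible

variable {p v s s' : ℕ} {S : Finset ℕ}

lemma MinDownStretch.dig_left_ne_zero (h : MinDownStretch p v (Ico s s')) (hss : s < s') :
    dig p v s ≠ 0 :=
  h.1.1 s (by simpa) (s.eq_zero_or_pos.imp_right fun _ => by simp only [mem_Ico]; omega)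

lemma MinDownStretch.dig_right_ne_zero (h : MinDownStretch p v (Ico s s')) (hss : s < s') :
    dig p v s' ≠ 0 := by
  intro h0
  have := h.1.2 (s' - 1) (by simp only [mem_Ico]; omega) (by rwa [Nat.sub_add_cancel (by omega)])
  simp only [mem_Ico] at this
  omega

/-- A nonzero digit strictly inside the stretch would cut off a smaller admissible stretch. -/
lemma MinDownStretch.dig_eq_zero_of_mem_Ioo (h : MinDownStretch p v (Ico s s')) (hss : s < s')
    {t : ℕ} (ht : t ∈ Ioo s s') : dig p v t = 0 := by
  rw [mem_Ioo] at ht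
  by_contra ht0
  refine h.2.2 (Ico s t) ?_ ⟨s, by simp only [mem_Ico]; omega⟩ ⟨?_, ?_⟩
  · exact (ssubset_iff_of_subset (Ico_subset_Ico_right ht.2.le)).2
      ⟨t, by simp only [mem_Ico]; omega, by simp⟩
  · intro x hx hmin
    simp only [mem_Ico] at hx hmin
    obtain rfl : x = s := by omega
    exact h.dig_left_ne_zero hss
  · intro x hx h0
    simp only [mem_Ico] at hx ⊢
    refine ⟨by omega, lt_of_le_of_ne (by omega) fun hxt => ht0 (hxt ▸ h0)⟩

lemma DownAdm.Ico_subset (hS : DownAdm p v S) (hsS : s ∈ S)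
    (hmid : ∀ i ∈ Ioo s s', dig p v i = 0) : Ico s s' ⊆ S := by
  intro i hi
  rw [mem_Ico] at hi
  obtain ⟨hsi, his'⟩ := hi
  induction i, hsi using Nat.le_induction with
  | base => exact hsS
  | succ i hsi ih => exact hS.2 i (ih (by omega)) (hmid (i + 1) (by simp only [mem_Ioo]; omega))

lemma lt_or_lt_of_mem_sdiff_Ico (hs'S : s' ∉ S) {i : ℕ} (hi : i ∈ S \ Ico s s') :
    i < s ∨ s' < i := by
  obtain ⟨hiS, hi⟩ := mem_sdiff.1 hi
  have : i ≠ s' := fun h => hs'S (h ▸ hiS)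
  simp only [mem_Ico] at hi
  omega

lemma DownAdm.sdiff_Ico {w : ℕ} (hS : DownAdm p v S) (hs'S : s' ∉ S)
    (hw : ∀ i, i < s ∨ s' < i → dig p w i = dig p v i) (hws : dig p w s ≠ 0) :
    DownAdm p w (S \ Ico s s') := by
  constructor
  · intro i hi hmin
    have hi' := lt_or_lt_of_mem_sdiff_Ico hs'S hi
    rw [hw i hi']
    refine hS.1 i (mem_sdiff.1 hi).1 (hmin.imp_right fun h h' => h (mem_sdiff.2 ⟨h', ?_⟩))
    simp only [mem_Ico]
    omega
  · intro i hi h0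
    have hi' := lt_or_lt_of_mem_sdiff_Ico hs'S hi
    rcases eq_or_ne (i + 1) s with hs | hs
    · exact absurd (hs ▸ h0) hws
    · rw [hw (i + 1) (by omega)] at h0
      refine mem_sdiff.2 ⟨hS.2 i (mem_sdiff.1 hi).1 h0, ?_⟩
      simp only [mem_Ico]
      omega

end Admissible

section Lambda

variable {p v s s' : ℕ} {S : Finset ℕ}

def lamFactor (p v : ℕ) (S : Finset ℕ) (t : ℕ) : ℚ :=
  (-1 : ℚ) ^ (dig p v t * p ^ t) *
    ((vdown p (fancest' p v t) S : ℚ) / (vdown p (fancest' p v (t + 1)) S : ℚ))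

lemma lam_eq_prod_lamFactor : lam p v S = ∏ t ∈ S, lamFactor p v S t := rfl

lemma lamFactor_eq_one {t : ℕ} (hd : dig p v t = 0) (hne : vdown p (fancest' p v t) S ≠ 0) :
    lamFactor p v S t = 1 := by
  have h := fancest'_eq_add (p := p) v t
  rw [hd, zero_mul, zero_add] at h
  rw [lamFactor, ← h, hd, zero_mul, pow_zero, one_mul, div_self (by exact_mod_cast hne)]

lemma lamFactor_vdownN_Ico (hp : 2 ≤ p) (hss : s < s') (hmid : ∀ i ∈ Ioo s s', dig p v i = 0)
    (hs' : dig p v s' ≠ 0) (hsub : Ico s s' ⊆ S) (hs'S : s' ∉ S) {t : ℕ} (ht : t < s ∨ s' < t) :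
    lamFactor p (vdownN p v (Ico s s')) (S \ Ico s s') t = lamFactor p v S t := by
  have hw {i : ℕ} := dig_vdownN_Ico_of_lt_or_lt (i := i) hp hss hmid hs'
  have hvdown {u : ℕ} (hu : u ≤ s ∨ s' < u) :
      vdown p (fancest' p (vdownN p v (Ico s s')) u) (S \ Ico s s') =
        vdown p (fancest' p v u) S := by
    refine vdown_sdiff_of_vdown_eq hp hsub (fancest'_vdownN_Ico hp hss hmid hs' hu) fun i hi => ?_
    simp only [dig_fancest' (by omega : 0 < p), hw (lt_or_lt_of_mem_sdiff_Ico hs'S hi)]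
  rw [lamFactor, lamFactor, hw ht, hvdown (by omega), hvdown (by omega)]

end Lambda

theorem stmt17_general (p v : ℕ) (hp : p.Prime) (S : Finset ℕ) (s s' : ℕ)
    (hss : s < s') (hS : DownAdm p v S)
    (hmin : MinDownStretch p v (Finset.Ico s s'))
    (hsS : s ∈ S) (hs'S : s' ∉ S) :
    Finset.Ico s s' ⊆ S ∧
    DownAdm p (vdownN p v (Finset.Ico s s')) (S \ Finset.Ico s s') ∧
    lam p v S * ((-1 : ℚ) ^ (dig p v s * p ^ s) *
        ((vdown p (fancest' p v (s + 1)) S : ℚ) / (vdown p (fancest' p v s) S : ℚ))) =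
      lam p (vdownN p v (Finset.Ico s s')) (S \ Finset.Ico s s') := by
  have hp2 := hp.two_le
  have hs := hmin.dig_left_ne_zero hss
  have hmid : ∀ t ∈ Ioo s s', dig p v t = 0 := fun _ => hmin.dig_eq_zero_of_mem_Ioo hss
  have hs' := hmin.dig_right_ne_zero hss
  have hsub := hS.Ico_subset hsS hmid
  refine ⟨hsub, hS.sdiff_Ico hs'S (fun i => dig_vdownN_Ico_of_lt_or_lt hp2 hss hmid hs')
    (dig_vdownN_Ico_ne_zero hp2 hss hs hmid hs'), ?_⟩
  have hF (t : ℕ) (ht : t ∈ S ∨ dig p v t ≠ 0) : (vdown p (fancest' p v t) S : ℚ) ≠ 0 := by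
    exact_mod_cast (vdown_fancest'_pos hp2 hS ht).ne'
  have hFs1 : (vdown p (fancest' p v (s + 1)) S : ℚ) ≠ 0 :=
    hF _ (by by_cases h : dig p v (s + 1) = 0 <;> simp [h, hS.2 s hsS])
  have hinner : ∏ t ∈ Ico (s + 1) s', lamFactor p v S t = 1 :=
    prod_eq_one fun t ht =>
      lamFactor_eq_one (hmid t (by simp only [mem_Ico, mem_Ioo] at ht ⊢; omega))
        (by exact_mod_cast hF t (Or.inl (hsub (Ico_subset_Ico_left s.le_succ ht))))
  rw [lam_eq_prod_lamFactor, lam_eq_prod_lamFactor, ← prod_sdiff hsub,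
    prod_eq_prod_Ico_succ_bot hss, hinner, mul_one,
    prod_congr rfl fun t ht => lamFactor_vdownN_Ico hp2 hss hmid hs' hsub hs'S
      (lt_or_lt_of_mem_sdiff_Ico hs'S ht), lamFactor]
  field_simp [hF s (Or.inl hsS), hFs1]
  rw [← pow_mul, pow_mul', neg_one_sq, one_pow, mul_one]

/-- Let `S` be down-admissible for `v` and `S' = {s, …, s'-1}` a minimal
down-admissible stretch for `v` with `s ∈ S` and `s' ∉ S`. Then `S' ⊆ S`, the set
`S \ S'` is down-admissible for `v[S']`, and
`λ_{v,S} · (-1)^(a_s p^s) · fancest_s(v)[S]± / fancest_{s-1}(v)[S]± = λ_{v[S'], S \ S'}`. -/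
theorem stmt17 (p v : ℕ) (hp : p.Prime) (hv : 1 ≤ v) (S : Finset ℕ) (s s' : ℕ)
    (hss : s < s') (hS : DownAdm p v S)
    (hmin : MinDownStretch p v (Finset.Ico s s'))
    (hsS : s ∈ S) (hs'S : s' ∉ S) :
    Finset.Ico s s' ⊆ S ∧
    DownAdm p (vdownN p v (Finset.Ico s s')) (S \ Finset.Ico s s') ∧
    lam p v S * ((-1 : ℚ) ^ (dig p v s * p ^ s) *
        ((vdown p (fancest' p v (s + 1)) S : ℚ) / (vdown p (fancest' p v s) S : ℚ))) =
      lam p (vdownN p v (Finset.Ico s s')) (S \ Finset.Ico s s') :=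
  stmt17_general p v hp S s s' hss hS hmin hsS hs'S

end SL2Tilt
end
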